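/- (Coefficient form of the quantum MacWilliams identity) With notation as in the MacWilliams identity for symplectic orthogonal groups, B_w = (1/|V^⊥|) Σ_{w'=0}^n P_w(w',n) A_{w'} for each w, where P_w(w',n) = Σ_{u=0}^{w} (−1)^u 3^{w−u} C(w',u) C(n−w', w−u) is the quaternary Krawtchouk polynomial. -/

import Mathlib

/-- Pauli vector space: pairs (u,v) of binary n-tuples labeling `X^u Z^v`. -/
abbrev PV (n : ℕ) := (Fin n → ZMod 2) × (Fin n → ZMod 2)

/-- The symplectic inner product `(u₁,v₁)*(u₂,v₂) = u₁·v₂ + u₂·v₁ (mod 2)`. -/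
def sympl {n : ℕ} (a b : PV n) : ZMod 2 :=
  (∑ i, a.1 i * b.2 i) + (∑ i, a.2 i * b.1 i)

lemma sympl_add_left {n : ℕ} (a b c : PV n) :
    sympl (a + b) c = sympl a c + sympl b c := by
  simp only [sympl, Prod.fst_add, Prod.snd_add, Pi.add_apply, add_mul]
  rw [Finset.sum_add_distrib, Finset.sum_add_distrib]
  ring

lemma sympl_smul_left {n : ℕ} (r : ZMod 2) (a c : PV n) :
    sympl (r • a) c = r * sympl a c := by
  simp only [sympl, Prod.smul_fst, Prod.smul_snd, Pi.smul_apply, smul_eq_mul, mul_assoc]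
  rw [← Finset.mul_sum, ← Finset.mul_sum, ← mul_add]

/-- Symplectic orthogonal complement of a subspace of `PV n`. -/
def sOrth {n : ℕ} (V : Submodule (ZMod 2) (PV n)) : Submodule (ZMod 2) (PV n) where
  carrier := {g | ∀ h ∈ V, sympl g h = 0}
  zero_mem' := by
    intro h _
    have : (0 : PV n) = (0 : ZMod 2) • (0 : PV n) := by simp
    rw [this, sympl_smul_left, zero_mul]
  add_mem' := by
    intro a b ha hb x hx
    rw [sympl_add_left, ha x hx, hb x hx, add_zero]
  smul_mem' := by
    intro r a ha x hx
    rw [sympl_smul_left, ha x hx, mul_zero]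

/-- Pauli weight of `(u,v)`: number of positions where `(uᵢ,vᵢ) ≠ (0,0)`. -/
def wt {n : ℕ} (a : PV n) : ℕ :=
  (Finset.univ.filter fun i => a.1 i ≠ 0 ∨ a.2 i ≠ 0).card

/-- The quaternary Krawtchouk polynomial
`P_w(w',n) = Σ_{u=0}^{w} (−1)^u 3^{w−u} C(w',u) C(n−w',w−u)`. -/
def kraw (w w' n : ℕ) : ℤ :=
  ∑ u ∈ Finset.range (w + 1),
    (-1 : ℤ) ^ u * 3 ^ (w - u) * (w'.choose u) * ((n - w').choose (w - u))

/-! Write `χ_g(h) = (-1)^⟨g, h⟩`. Orthogonality of characters on `V^⊥`, together with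
`(V^⊥)^⊥ = V`, gives `|V^⊥| B_w = Σ_{wt g = w} Σ_{h ∈ V^⊥} χ_g(h)`; the double-complement identity
follows from `|W| |W^⊥| = 4^n`, obtained by summing `χ_g(h)` over `g ∈ PV n`, `h ∈ W` in both
orders. After swapping the sums, the inner sum `Σ_{wt g = w} χ_g(h)` depends only on `wt h`:
the sum over `g` factors over the `n` coordinates,
`Σ_g χ_g(h) X^{wt g} = (1 - X)^{wt h} (1 + 3X)^{n - wt h}`,
and its coefficient of `X^w` is `P_w(wt h, n)`. -/

open Finset Polynomial
open scoped Classical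

lemma AddChar.map_sum_eq_prod {ι A M : Type*} [AddCommMonoid A] [CommMonoid M]
    (ψ : AddChar A M) (s : Finset ι) (f : ι → A) : ψ (∑ i ∈ s, f i) = ∏ i ∈ s, ψ (f i) := by
  induction s using Finset.cons_induction with
  | empty => simp
  | cons a s ha ih => rw [sum_cons, prod_cons, AddChar.map_add_eq_mul, ih]

lemma pow_card_filter_ne_zero {ι M R : Type*} [Fintype ι] [Zero M] [DecidableEq M] [CommMonoid R]
    (p : ι → M) (x : R) : x ^ #{i | p i ≠ 0} = ∏ i, if p i = 0 then 1 else x := by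
  rw [prod_ite, prod_const_one, prod_const, one_mul]

lemma card_filter_eq_card_sub_card_filter_not {ι : Type*} [Fintype ι] (P : ι → Prop)
    [DecidablePred P] :
    #{i | P i} = Fintype.card ι - #{i | ¬P i} := by
  rw [← card_univ, ← card_filter_add_card_filter_not (s := univ) P, Nat.add_sub_cancel]

lemma coeff_one_add_C_mul_X_pow {R : Type*} [CommSemiring R] (a : R) (m k : ℕ) :
    ((1 + C a * X) ^ m).coeff k = a ^ k * m.choose k := by
  have hexp : (1 + C a * X) ^ m = ∑ i ∈ range (m + 1), C (a ^ i * m.choose i) * X ^ i := by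
    rw [add_comm, add_pow]
    refine sum_congr rfl fun i _ => ?_
    simp only [mul_pow, one_pow, mul_one, C_mul, C_pow, map_natCast]
    ring
  rw [hexp, finsetSum_coeff]
  simp only [coeff_C_mul_X_pow]
  rw [sum_ite_eq]
  split_ifs with hk
  · rfl
  · rw [Nat.choose_eq_zero_of_lt (by simpa using hk), Nat.cast_zero, mul_zero]

lemma kraw_eq_coeff (w w' n : ℕ) :
    kraw w w' n = ((1 - X : ℤ[X]) ^ w' * (1 + 3 * X) ^ (n - w')).coeff w := by
  rw [coeff_mul, Finset.Nat.sum_antidiagonal_eq_sum_range_succ_mk, kraw]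
  refine sum_congr rfl fun u _ => ?_
  rw [show (1 - X : ℤ[X]) = 1 + C (-1) * X by simp [sub_eq_add_neg],
    show (3 : ℤ[X]) = C 3 from rfl, coeff_one_add_C_mul_X_pow, coeff_one_add_C_mul_X_pow]
  ring

section Pauli

variable {n : ℕ}

lemma sympl_comm (a b : PV n) : sympl a b = sympl b a := by
  simp only [sympl, mul_comm (a.1 _), mul_comm (a.2 _)]
  exact add_comm _ _

lemma sympl_add_right (a b c : PV n) : sympl a (b + c) = sympl a b + sympl a c := by
  rw [sympl_comm, sympl_add_left, sympl_comm b, sympl_comm c]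

lemma exists_sympl_ne_zero {h : PV n} (hh : h ≠ 0) : ∃ g : PV n, sympl g h ≠ 0 := by
  obtain ⟨i, hi⟩ : ∃ i, h.1 i ≠ 0 ∨ h.2 i ≠ 0 := by
    by_contra! hc
    exact hh (Prod.ext (funext fun i => (hc i).1) (funext fun i => (hc i).2))
  rcases hi with hi | hi
  · exact ⟨(0, Pi.single i 1), by simpa [sympl, Pi.single_apply] using hi⟩
  · exact ⟨(Pi.single i 1, 0), by simpa [sympl, Pi.single_apply] using hi⟩

def symplChar (g : PV n) : AddChar (PV n) ℤ where
  toFun h := AddChar.zmodChar 2 neg_one_sq (sympl g h)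
  map_zero_eq_one' := by simp [sympl]
  map_add_eq_mul' a b := by rw [sympl_add_right, AddChar.map_add_eq_mul]

lemma symplChar_apply (g h : PV n) : symplChar g h = (-1) ^ (sympl g h).val := rfl

lemma symplChar_comm (g h : PV n) : symplChar g h = symplChar h g := by
  rw [symplChar_apply, symplChar_apply, sympl_comm]

lemma symplChar_apply_eq_one_iff {g h : PV n} : symplChar g h = 1 ↔ sympl g h = 0 := by
  rw [symplChar_apply]
  generalize sympl g h = x
  revert x
  decide

-- In `AddChar`, `0` is the trivial character `fun _ => 1`.
lemma symplChar_eq_zero_iff {h : PV n} : symplChar h = 0 ↔ h = 0 := by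
  refine ⟨fun h0 => ?_, ?_⟩
  · by_contra hh
    obtain ⟨g, hg⟩ := exists_sympl_ne_zero hh
    have := symplChar_apply_eq_one_iff.mp (DFunLike.congr_fun h0 g)
    exact hg (by rwa [sympl_comm])
  · rintro rfl
    ext g
    simp [symplChar_apply, sympl]

lemma sum_symplChar_submodule (W : Submodule (ZMod 2) (PV n)) (g : PV n) :
    ∑ h : W, symplChar g h = if g ∈ sOrth W then (Nat.card W : ℤ) else 0 := by
  have hiff : (symplChar g).compAddMonoidHom W.subtype.toAddMonoidHom = 0 ↔ g ∈ sOrth W := by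
    simp only [AddChar.ext_iff, AddChar.compAddMonoidHom_apply, AddChar.zero_apply, Subtype.forall]
    simp [symplChar_apply_eq_one_iff, sOrth]
  have := AddChar.sum_eq_ite ((symplChar g).compAddMonoidHom W.subtype.toAddMonoidHom)
  simpa [hiff, Nat.card_eq_fintype_card] using this

lemma sum_symplChar_left (h : PV n) :
    ∑ g : PV n, symplChar g h = if h = 0 then (Nat.card (PV n) : ℤ) else 0 := by
  simp_rw [symplChar_comm _ h]
  simpa [symplChar_eq_zero_iff, Nat.card_eq_fintype_card] using AddChar.sum_eq_ite (symplChar h)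

lemma card_mul_card_sOrth (W : Submodule (ZMod 2) (PV n)) :
    Nat.card W * Nat.card (sOrth W) = Nat.card (PV n) := by
  have hsum : ∑ g : PV n, ∑ h : W, symplChar g h = ∑ h : W, ∑ g : PV n, symplChar g h :=
    sum_comm
  simp_rw [sum_symplChar_submodule, sum_symplChar_left] at hsum
  simp only [Submodule.coe_eq_zero, sum_ite_eq', mem_univ, if_true, ← sum_filter, sum_const,
    nsmul_eq_mul] at hsum
  rw [Nat.card_eq_fintype_card (α := sOrth W), Fintype.card_subtype, mul_comm]
  exact_mod_cast hsum

lemma sOrth_sOrth (W : Submodule (ZMod 2) (PV n)) : sOrth (sOrth W) = W := by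
  have hle : W ≤ sOrth (sOrth W) := fun g hg h hh => by rw [sympl_comm]; exact hh g hg
  have hcard : Nat.card (sOrth (sOrth W)) = Nat.card W := by
    have h1 := card_mul_card_sOrth W
    have h2 := card_mul_card_sOrth (sOrth W)
    have : 0 < Nat.card (sOrth W) := Nat.card_pos
    nlinarith
  exact (Submodule.toAddSubgroup_injective
    (AddSubgroup.eq_of_le_of_card_ge (K := (sOrth (sOrth W)).toAddSubgroup) hle hcard.le)).symm

lemma sum_sum_symplChar_sOrth (V : Submodule (ZMod 2) (PV n)) (s : Finset (PV n)) :
    ∑ g ∈ s, ∑ h : sOrth V, symplChar g (h : PV n) = Nat.card (sOrth V) * #{g ∈ s | g ∈ V} := by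
  simp_rw [sum_symplChar_submodule, sOrth_sOrth]
  rw [sum_ite, sum_const_zero, add_zero, sum_const, nsmul_eq_mul, mul_comm]

abbrev pauliEquiv (n : ℕ) : (Fin n → ZMod 2 × ZMod 2) ≃ PV n :=
  Equiv.arrowProdEquivProdArrow _ _ _

lemma sympl_pauliEquiv (p q : Fin n → ZMod 2 × ZMod 2) :
    sympl (pauliEquiv n p) (pauliEquiv n q) = ∑ i, ((p i).1 * (q i).2 + (p i).2 * (q i).1) := by
  simp [sympl, sum_add_distrib]

lemma symplChar_pauliEquiv (p q : Fin n → ZMod 2 × ZMod 2) :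
    symplChar (pauliEquiv n p) (pauliEquiv n q) =
      ∏ i, (-1) ^ ((p i).1 * (q i).2 + (p i).2 * (q i).1).val := by
  change AddChar.zmodChar 2 neg_one_sq _ = _
  rw [sympl_pauliEquiv, AddChar.map_sum_eq_prod]
  rfl

lemma wt_pauliEquiv (p : Fin n → ZMod 2 × ZMod 2) : wt (pauliEquiv n p) = #{i | p i ≠ 0} := by
  unfold wt
  congr 1
  ext i
  simp only [mem_filter, mem_univ, true_and, ne_eq, Prod.ext_iff, Prod.fst_zero, Prod.snd_zero]
  tauto

lemma sum_neg_one_pow_mul_ite_X (b : ZMod 2 × ZMod 2) :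
    ∑ a : ZMod 2 × ZMod 2,
      ((-1 : ℤ[X]) ^ (a.1 * b.2 + a.2 * b.1).val * if a = 0 then 1 else X) =
      if b = 0 then 1 + 3 * X else 1 - X := by
  have huniv : (univ : Finset (ZMod 2)) = {0, 1} := rfl
  obtain ⟨b₁, b₂⟩ := b
  obtain rfl | rfl : b₁ = 0 ∨ b₁ = 1 := by revert b₁; decide
  all_goals obtain rfl | rfl : b₂ = 0 ∨ b₂ = 1 := by revert b₂; decide
  all_goals
    simp [Fintype.sum_prod_type, huniv, show (1 + 1 : ZMod 2) = 0 from rfl,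
      show (1 : ZMod 2).val = 1 from rfl]
    ring

lemma sum_C_symplChar_mul_X_pow_wt (h : PV n) :
    ∑ g : PV n, C (symplChar g h) * X ^ wt g = (1 - X) ^ wt h * (1 + 3 * X) ^ (n - wt h) := by
  obtain ⟨q, rfl⟩ := (pauliEquiv n).surjective h
  rw [← (pauliEquiv n).sum_comp]
  calc ∑ p, C (symplChar (pauliEquiv n p) (pauliEquiv n q)) * X ^ wt (pauliEquiv n p)
      = ∑ p : Fin n → ZMod 2 × ZMod 2, ∏ i,
          ((-1 : ℤ[X]) ^ ((p i).1 * (q i).2 + (p i).2 * (q i).1).val *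
            if p i = 0 then 1 else X) := by
        refine sum_congr rfl fun p _ => ?_
        rw [prod_mul_distrib, symplChar_pauliEquiv, wt_pauliEquiv, pow_card_filter_ne_zero]
        simp
    _ = ∏ i, ∑ a : ZMod 2 × ZMod 2,
          ((-1 : ℤ[X]) ^ (a.1 * (q i).2 + a.2 * (q i).1).val * if a = 0 then 1 else X) := by
        rw [Fintype.prod_sum]
    _ = ∏ i, if q i = 0 then 1 + 3 * X else 1 - X := by simp_rw [sum_neg_one_pow_mul_ite_X]
    _ = (1 - X) ^ wt (pauliEquiv n q) * (1 + 3 * X) ^ (n - wt (pauliEquiv n q)) := by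
        rw [prod_ite, prod_const, prod_const, wt_pauliEquiv,
          card_filter_eq_card_sub_card_filter_not, Fintype.card_fin, mul_comm]

lemma sum_symplChar_wt_eq_kraw (w : ℕ) (h : PV n) :
    ∑ g with wt g = w, symplChar g h = kraw w (wt h) n := by
  rw [kraw_eq_coeff, ← sum_C_symplChar_mul_X_pow_wt, finsetSum_coeff, sum_filter]
  simp [eq_comm]

lemma wt_le (g : PV n) : wt g ≤ n :=
  (card_filter_le _ _).trans (card_fin n).le

lemma sum_comp_wt (W : Submodule (ZMod 2) (PV n)) {M : Type*} [AddCommMonoid M] (f : ℕ → M) :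
    ∑ h : W, f (wt (h : PV n)) =
      ∑ w' ∈ range (n + 1), Nat.card {g : PV n // g ∈ W ∧ wt g = w'} • f w' := by
  rw [← sum_fiberwise_of_maps_to (g := fun h : W => wt (h : PV n)) (t := range (n + 1))
    fun h _ => mem_range.2 (Nat.lt_succ_of_le (wt_le h.1))]
  refine sum_congr rfl fun w' _ => ?_
  rw [sum_congr rfl fun h hh => by rw [(mem_filter.1 hh).2], sum_const, ← Fintype.card_subtype,
    ← Nat.card_eq_fintype_card,
    Nat.card_congr (Equiv.subtypeSubtypeEquivSubtypeInter (· ∈ W) (wt · = w'))]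

end Pauli

/-- coefficient form of the quantum MacWilliams identity:
`B_w = |V^⊥|⁻¹ Σ_{w'=0}^n P_w(w',n) A_{w'}`. -/
theorem macwilliams_coefficients {n : ℕ} (V : Submodule (ZMod 2) (PV n))
    (B A : ℕ → ℕ)
    (hB : ∀ w, B w = Nat.card {g : PV n // g ∈ V ∧ wt g = w})
    (hA : ∀ w', A w' = Nat.card {g : PV n // g ∈ sOrth V ∧ wt g = w'}) :
    ∀ w, w ≤ n →
      (B w : ℝ) = (1 / (Nat.card (sOrth V) : ℝ)) *
        ∑ w' ∈ Finset.range (n + 1), (kraw w w' n : ℝ) * (A w' : ℝ) := by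
  intro w _
  have hBw : #{g | wt g = w ∧ g ∈ V} = B w := by
    rw [hB, Nat.card_eq_fintype_card, Fintype.card_subtype]
    simp_rw [and_comm]
  have key : (Nat.card (sOrth V) * B w : ℤ) = ∑ w' ∈ range (n + 1), kraw w w' n * A w' :=
    calc (Nat.card (sOrth V) * B w : ℤ)
        = ∑ g with wt g = w, ∑ h : sOrth V, symplChar g (h : PV n) := by
          rw [sum_sum_symplChar_sOrth, filter_filter, hBw]
      _ = ∑ h : sOrth V, ∑ g with wt g = w, symplChar g (h : PV n) := sum_comm
      _ = ∑ h : sOrth V, kraw w (wt (h : PV n)) n := by simp_rw [sum_symplChar_wt_eq_kraw]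
      _ = ∑ w' ∈ range (n + 1), kraw w w' n * A w' := by
          rw [sum_comp_wt (sOrth V) fun w' => kraw w w' n]
          simp only [hA, nsmul_eq_mul, mul_comm]
  have hpos : (0 : ℝ) < Nat.card (sOrth V) := by exact_mod_cast Nat.card_pos
  rw [one_div, eq_inv_mul_iff_mul_eq₀ hpos.ne']
  exact_mod_cast key
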